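/- Consider the program P consisting of the two clauses p(X,a) ← p(X,b) and p(X,b) ←, with mode p(In,Out), where a and b are distinct constants. Then P is input terminating but P is not quasi recurrent (there is no moded level mapping with respect to which P is quasi recurrent). Hence quasi recurrency is not a necessary condition for input termination of nicely-moded programs in general. -/

import Mathlib

/- ## First-order terms -/

inductive Trm (F : Type) : Type
  | var : ℕ → Trm F
  | fn : F → List (Trm F) → Trm F

/-- A substitution: a mapping from variables to terms. -/
abbrev Subst (F : Type) := ℕ → Trm F

namespace Trm
variable {F : Type}

/-- Application of a substitution to a term. -/
def subst (σ : Subst F) : Trm F → Trm F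
  | .var x => σ x
  | .fn f ts => .fn f (ts.attach.map (fun t => t.1.subst σ))
decreasing_by simp_wf; have := List.sizeOf_lt_of_mem t.2; omega

/-- The set of variables occurring in a term. -/
def vars : Trm F → Set ℕ
  | .var x => {x}
  | .fn _ ts => (ts.attach.map (fun t => t.1.vars)).foldr (· ∪ ·) ∅
decreasing_by simp_wf; have := List.sizeOf_lt_of_mem t.2; omega

/-- The number of occurrences of a variable in a term. -/
def varCount (x : ℕ) : Trm F → ℕ
  | .var y => if y = x then 1 else 0
  | .fn _ ts => (ts.attach.map (fun t => t.1.varCount x)).sum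
decreasing_by simp_wf; have := List.sizeOf_lt_of_mem t.2; omega

/-- The subterm relation. -/
inductive IsSubterm : Trm F → Trm F → Prop
  | refl (t : Trm F) : IsSubterm t t
  | fn {s t : Trm F} {f : F} {ts : List (Trm F)} : t ∈ ts → IsSubterm s t → IsSubterm s (.fn f ts)

end Trm

/- ## Sequences of terms -/

/-- Application of a substitution to a sequence of terms. -/
def substList {F : Type} (σ : Subst F) (ts : List (Trm F)) : List (Trm F) :=
  ts.map (Trm.subst σ)

/-- The set of variables occurring in a sequence of terms. -/
def varsList {F : Type} (ts : List (Trm F)) : Set ℕ := ⋃ t ∈ ts, t.vars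

/-- The number of occurrences of a variable in a sequence of terms. -/
def varCountList {F : Type} (x : ℕ) (ts : List (Trm F)) : ℕ :=
  (ts.map (Trm.varCount x)).sum

/-- A sequence of terms is linear if every variable occurs at most once in it. -/
def LinearList {F : Type} (ts : List (Trm F)) : Prop :=
  ∀ x : ℕ, varCountList x ts ≤ 1

/-- A term occurs in a sequence of terms if it is a subterm of one of its components. -/
def OccursInList {F : Type} (s : Trm F) (ts : List (Trm F)) : Prop :=
  ∃ t ∈ ts, Trm.IsSubterm s t

namespace Subst
variable {F : Type}

/-- The identity (empty) substitution. -/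
def id : Subst F := Trm.var

/-- Composition of substitutions: `(comp σ τ)` applies `σ` first, then `τ`. -/
def comp (σ τ : Subst F) : Subst F := fun x => (σ x).subst τ

/-- The domain of a substitution. -/
def dom (σ : Subst F) : Set ℕ := {x | σ x ≠ Trm.var x}

/-- A substitution has finite domain. -/
def FiniteDom (σ : Subst F) : Prop := σ.dom.Finite

/-- The set of variables of a substitution: its domain together with the
variables occurring in the images of domain variables. -/
def vars (σ : Subst F) : Set ℕ := σ.dom ∪ ⋃ x ∈ σ.dom, (σ x).vars

/-- A renaming: a substitution given by a permutation of the variables. -/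
def IsRenaming (σ : Subst F) : Prop := ∃ e : ℕ ≃ ℕ, σ = fun x => Trm.var (e x)

end Subst

/-- `θ` is a unifier of the sequences of terms `z` and `w`. -/
def IsUnifierList {F : Type} (θ : Subst F) (z w : List (Trm F)) : Prop :=
  substList θ z = substList θ w

/-- `θ` is a most general unifier (mgu) of the sequences of terms `z` and `w`. -/
def IsMguList {F : Type} (θ : Subst F) (z w : List (Trm F)) : Prop :=
  IsUnifierList θ z w ∧ ∀ σ : Subst F, IsUnifierList σ z w → ∃ γ : Subst F, Subst.comp θ γ = σ

/- ## Atoms, queries, clauses, programs (in presence of a fixed mode) -/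

/-- An atom `p(s,t)`, where `s` is the sequence of terms filling in the input
positions and `t` the sequence of terms filling in the output positions
(as determined by the fixed mode of `p`). -/
structure Atom (P F : Type) where
  rel : P
  inp : List (Trm F)
  out : List (Trm F)

namespace Atom
variable {P F : Type}

def subst (σ : Subst F) (A : Atom P F) : Atom P F :=
  ⟨A.rel, substList σ A.inp, substList σ A.out⟩

def vars (A : Atom P F) : Set ℕ := varsList A.inp ∪ varsList A.out

/-- `θ` is a unifier of two atoms. -/
def IsUnifier (θ : Subst F) (A B : Atom P F) : Prop := A.subst θ = B.subst θ

/-- `θ` is a most general unifier of two atoms. -/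
def IsMgu (θ : Subst F) (A B : Atom P F) : Prop :=
  IsUnifier θ A B ∧ ∀ σ : Subst F, IsUnifier σ A B → ∃ γ : Subst F, Subst.comp θ γ = σ

/-- An mgu of two atoms is relevant if its variables are among those of the two atoms. -/
def RelevantFor (θ : Subst F) (A B : Atom P F) : Prop :=
  Subst.vars θ ⊆ A.vars ∪ B.vars

end Atom

/-- A query: a finite sequence of atoms. -/
abbrev Query (P F : Type) := List (Atom P F)

/-- The set of variables of a query. -/
def queryVars {P F : Type} (Q : Query P F) : Set ℕ := ⋃ A ∈ Q, A.vars

/-- `In(Q)`: the sequence of terms filling in the input positions of `Q`. -/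
def queryInp {P F : Type} (Q : Query P F) : List (Trm F) := Q.flatMap Atom.inp

/-- `Out(Q)`: the sequence of terms filling in the output positions of `Q`. -/
def queryOut {P F : Type} (Q : Query P F) : List (Trm F) := Q.flatMap Atom.out

/-- A clause `H ← B`. -/
structure Clause (P F : Type) where
  head : Atom P F
  body : Query P F

namespace Clause
variable {P F : Type}

def subst (σ : Subst F) (c : Clause P F) : Clause P F :=
  ⟨c.head.subst σ, c.body.map (Atom.subst σ)⟩

def vars (c : Clause P F) : Set ℕ := c.head.vars ∪ queryVars c.body

end Clause

/-- A variant of a clause: obtained by applying a renaming. -/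
def IsVariantOf {P F : Type} (c c' : Clause P F) : Prop :=
  ∃ ρ : Subst F, Subst.IsRenaming ρ ∧ c' = c.subst ρ

/-- A program: a finite set of clauses (represented as a list). -/
abbrev Program (P F : Type) := List (Clause P F)

/- ## Nicely- and simply-moded objects -/

/-- A query `p1(s1,t1),…,pn(sn,tn)` is nicely-moded if `t1,…,tn` is a linear
sequence of terms and for all `i`, `Var(si) ∩ ⋃_{j=i}^{n} Var(tj) = ∅`. -/
def NMQuery {P F : Type} (Q : Query P F) : Prop :=
  LinearList (queryOut Q) ∧
  ∀ (i : ℕ) (h : i < Q.length),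
    varsList (Q.get ⟨i, h⟩).inp ∩ varsList (queryOut (Q.drop i)) = ∅

/-- A clause `p(s0,t0) ← Q` is nicely-moded if `Q` is nicely-moded and
`Var(s0)` is disjoint from the output variables of `Q`. -/
def NMClause {P F : Type} (c : Clause P F) : Prop :=
  NMQuery c.body ∧ varsList c.head.inp ∩ varsList (queryOut c.body) = ∅

/-- A program is nicely-moded if all its clauses are. -/
def NMProgram {P F : Type} (Pgm : Program P F) : Prop := ∀ c ∈ Pgm, NMClause c

/-- A query is simply-moded if it is nicely-moded and its sequence of output
terms is a (linear) sequence of variables. -/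
def SMQuery {P F : Type} (Q : Query P F) : Prop :=
  NMQuery Q ∧ ∀ t ∈ queryOut Q, ∃ x : ℕ, t = Trm.var x

/-- A clause is simply-moded if it is nicely-moded and its body is simply-moded. -/
def SMClause {P F : Type} (c : Clause P F) : Prop :=
  NMClause c ∧ SMQuery c.body

/-- A program is simply-moded if all its clauses are. -/
def SMProgram {P F : Type} (Pgm : Program P F) : Prop := ∀ c ∈ Pgm, SMClause c

/- ## Input-consuming derivations -/

/-- `ICStepAt Q k c θ Q'` : the query `Q'` is obtained from `Q` by an
input-consuming derivation step resolving the atom at position `k` with the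
(already renamed-apart) input clause `c`, via the relevant mgu `θ`. -/
def ICStepAt {P F : Type} (Q : Query P F) (k : ℕ) (c : Clause P F) (θ : Subst F)
    (Q' : Query P F) : Prop :=
  ∃ h : k < Q.length,
    Atom.IsMgu θ (Q.get ⟨k, h⟩) c.head ∧
    Atom.RelevantFor θ (Q.get ⟨k, h⟩) c.head ∧
    substList θ (Q.get ⟨k, h⟩).inp = (Q.get ⟨k, h⟩).inp ∧
    Q' = (Q.take k ++ c.body ++ Q.drop (k + 1)).map (Atom.subst θ)

/-- A (possibly partial, possibly infinite) input-consuming derivation of length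
`len` in program `Pgm`: queries `Q i`, selected atom positions `sel i`, input
clauses `cl i` (variants of program clauses) and relevant mgus `sub i`,
satisfying standardization apart. -/
structure ICDeriv {P F : Type} (Pgm : Program P F) (len : ℕ∞) where
  Q : ℕ → Query P F
  sel : ℕ → ℕ
  cl : ℕ → Clause P F
  sub : ℕ → Subst F
  step : ∀ i : ℕ, (i : ℕ∞) < len → ICStepAt (Q i) (sel i) (cl i) (sub i) (Q (i + 1))
  fromProg : ∀ i : ℕ, (i : ℕ∞) < len → ∃ c ∈ Pgm, IsVariantOf c (cl i)
  standApart : ∀ i : ℕ, (i : ℕ∞) < len →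
    Clause.vars (cl i) ∩
      (queryVars (Q 0) ∪ ⋃ j < i, (Clause.vars (cl j) ∪ Subst.vars (sub j))) = ∅

/-- The composition `θ1 θ2 ⋯ θn` of the first `n` step substitutions. -/
def compRange {F : Type} (θ : ℕ → Subst F) : ℕ → Subst F
  | 0 => Subst.id
  | n + 1 => Subst.comp (compRange θ n) (θ n)

/-- There exists an infinite input-consuming derivation of `Pgm ∪ {Q0}`. -/
def InfICDeriv {P F : Type} (Pgm : Program P F) (Q0 : Query P F) : Prop :=
  ∃ d : ICDeriv Pgm ⊤, d.Q 0 = Q0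

/-- A program is input terminating if all its input-consuming derivations
starting in a nicely-moded query are finite. -/
def InputTerminating {P F : Type} (Pgm : Program P F) : Prop :=
  ∀ Q : Query P F, NMQuery Q → ¬ InfICDeriv Pgm Q

/- ## Dependency between predicate symbols -/

/-- `p` is defined in `Pgm` if `p` occurs in the head of one of its clauses. -/
def DefinedIn {P F : Type} (Pgm : Program P F) (p : P) : Prop :=
  ∃ c ∈ Pgm, c.head.rel = p

/-- `p` occurs in `Pgm` (in a head or in a body). -/
def OccursInProg {P F : Type} (Pgm : Program P F) (p : P) : Prop :=
  ∃ c ∈ Pgm, c.head.rel = p ∨ ∃ B ∈ c.body, B.rel = p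

/-- `Pgm` extends `R` if no relation defined in `Pgm` occurs in `R`. -/
def ProgExtends {P F : Type} (Pgm R : Program P F) : Prop :=
  ∀ p : P, DefinedIn Pgm p → ¬ OccursInProg R p

/-- `p` refers to `q` in `Pgm`. -/
def RefersTo {P F : Type} (Pgm : Program P F) (p q : P) : Prop :=
  ∃ c ∈ Pgm, c.head.rel = p ∧ ∃ B ∈ c.body, B.rel = q

/-- `p ⊒ q` : `p` depends on `q` (reflexive-transitive closure of refers-to). -/
def PredDependsOn {P F : Type} (Pgm : Program P F) : P → P → Prop :=
  Relation.ReflTransGen (RefersTo Pgm)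

/-- `p ≃ q` : `p` and `q` are mutually dependent. -/
def MutDep {P F : Type} (Pgm : Program P F) (p q : P) : Prop :=
  PredDependsOn Pgm p q ∧ PredDependsOn Pgm q p

/-- `p ⊐ q` : `p ⊒ q` and not `p ≃ q`. -/
def SqSupset {P F : Type} (Pgm : Program P F) (p q : P) : Prop :=
  PredDependsOn Pgm p q ∧ ¬ MutDep Pgm p q

/- ## Moded level mappings and quasi recurrency -/

/-- A moded level mapping: a function from atoms to naturals which does not
depend on the output terms (and is invariant under renaming, as it is a
function on the extended Herbrand base). -/
def ModedLevelMapping {P F : Type} (lvl : Atom P F → ℕ) : Prop :=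
  (∀ (p : P) (s t u : List (Trm F)), lvl ⟨p, s, t⟩ = lvl ⟨p, s, u⟩) ∧
  (∀ (A : Atom P F) (ρ : Subst F), Subst.IsRenaming ρ → lvl (A.subst ρ) = lvl A)

/-- A clause is quasi recurrent wrt `lvl` (in program `Pgm`) if for every
instance `H ← A,B,C` of it, if `Rel(H) ≃ Rel(B)` then `|H| > |B|`. -/
def QRClause {P F : Type} (Pgm : Program P F) (lvl : Atom P F → ℕ) (c : Clause P F) : Prop :=
  ∀ θ : Subst F, ∀ B ∈ c.body, MutDep Pgm c.head.rel B.rel →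
    lvl (B.subst θ) < lvl (c.head.subst θ)

/-- A program is quasi recurrent wrt `lvl` if all its clauses are. -/
def QuasiRecurrentWrt {P F : Type} (Pgm : Program P F) (lvl : Atom P F → ℕ) : Prop :=
  ∀ c ∈ Pgm, QRClause Pgm lvl c

/-- A program is quasi recurrent if it is quasi recurrent wrt some moded level mapping. -/
def QuasiRecurrent {P F : Type} (Pgm : Program P F) : Prop :=
  ∃ lvl : Atom P F → ℕ, ModedLevelMapping lvl ∧ QuasiRecurrentWrt Pgm lvl
/- ## IC-trees -/

/-- `Q'` is a resolvent of `Q` and (a renamed-apart variant of) the clause `c`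
with respect to the atom at position `k`, via an input-consuming step. -/
def ICResolventOf {P F : Type} (Q : Query P F) (k : ℕ) (c : Clause P F)
    (Q' : Query P F) : Prop :=
  ∃ (c' : Clause P F) (θ : Subst F),
    IsVariantOf c c' ∧ Clause.vars c' ∩ queryVars Q = ∅ ∧ ICStepAt Q k c' θ Q'

/-- The atom at position `k` of `Q` is input-consuming resolvable wrt clause `c`. -/
def ICResolvable {P F : Type} (Q : Query P F) (k : ℕ) (c : Clause P F) : Prop :=
  ∃ Q' : Query P F, ICResolventOf Q k c Q'

/-- An IC-tree for `Pgm ∪ {Q0}`, represented by the set `T` of its paths from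
the root (a node of the tree is identified with the path reaching it):
its branches are input-consuming derivations of `Pgm ∪ {Q0}`, and every node
has exactly one descendant for every atom of its query and every program
clause wrt which that atom is input-consuming resolvable, this descendant
being a resolvent. -/
structure IsICTree {P F : Type} (Pgm : Program P F) (Q0 : Query P F)
    (T : Set (List (Query P F))) : Prop where
  root : [Q0] ∈ T
  starts : ∀ l ∈ T, ∃ l' : List (Query P F), l = Q0 :: l'
  prefixClosed : ∀ (l : List (Query P F)) (Qn : Query P F), l ++ [Qn] ∈ T → l ≠ [] → l ∈ T
  children : ∀ l ∈ T, ∀ (k : ℕ) (c : Clause P F), c ∈ Pgm →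
    ICResolvable (l.getLastD []) k c →
    ∃! Q' : Query P F, l ++ [Q'] ∈ T ∧ ICResolventOf (l.getLastD []) k c Q'
  childrenOnly : ∀ (l : List (Query P F)) (Q' : Query P F), l ++ [Q'] ∈ T → l ≠ [] →
    ∃ (k : ℕ) (c : Clause P F), c ∈ Pgm ∧ ICResolventOf (l.getLastD []) k c Q'
  branches : ∀ l ∈ T, ∃ d : ICDeriv Pgm ((l.length - 1 : ℕ) : ℕ∞),
    ∀ i < l.length, d.Q i = l.getD i []

/- ## Input-recursive programs -/

/-- A clause `H ← A,B,C` is input-recursive (in `Pgm`) if whenever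
`Rel(H) ≃ Rel(B)` then `Var(In(B)) ⊆ Var(In(H))`. -/
def InputRecursiveClause {P F : Type} (Pgm : Program P F) (c : Clause P F) : Prop :=
  ∀ B ∈ c.body, MutDep Pgm c.head.rel B.rel → varsList B.inp ⊆ varsList c.head.inp

/-- A program is input-recursive if all its clauses are. -/
def InputRecursive {P F : Type} (Pgm : Program P F) : Prop :=
  ∀ c ∈ Pgm, InputRecursiveClause Pgm c

/-- The constant `a`. -/
def constA : Trm Bool := Trm.fn false []

/-- The constant `b` (distinct from `a`). -/
def constB : Trm Bool := Trm.fn true []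

/-- The program consisting of the clauses `p(X,a) ← p(X,b)` and `p(X,b) ←`,
with mode `p(In,Out)`. -/
def examplePgm : Program Unit Bool :=
  [⟨⟨(), [Trm.var 0], [constA]⟩, [⟨(), [Trm.var 0], [constB]⟩]⟩,
   ⟨⟨(), [Trm.var 0], [constB]⟩, []⟩]

/- ## Auxiliary lemmas for statement 17 -/

lemma subst_var' {F : Type} (σ : Subst F) (x : ℕ) : (Trm.var x).subst σ = σ x := by
  rw [Trm.subst]

lemma subst_fn_nil' {F : Type} (σ : Subst F) (f : F) :
    (Trm.fn f []).subst σ = Trm.fn f [] := by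
  rw [Trm.subst]; simp

lemma constA_subst (σ : Subst Bool) : constA.subst σ = constA := subst_fn_nil' σ false

lemma constB_subst (σ : Subst Bool) : constB.subst σ = constB := subst_fn_nil' σ true

lemma constA_ne_constB : constA ≠ constB := by
  intro h
  simpa [constA, constB] using h

open Classical in
/-- Weight of an atom: 1 if its output is exactly `[b]` (such an atom cannot be
resolved with the first clause), 2 otherwise. -/
noncomputable def weightA (A : Atom Unit Bool) : ℕ := if A.out = [constB] then 1 else 2

noncomputable def measQ (Q : Query Unit Bool) : ℕ := (Q.map weightA).sum

lemma weightA_eq_of_out (A : Atom Unit Bool) (h : A.out = [constB]) : weightA A = 1 := by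
  unfold weightA; rw [if_pos h]

lemma weightA_eq_of_ne (A : Atom Unit Bool) (h : A.out ≠ [constB]) : weightA A = 2 := by
  unfold weightA; rw [if_neg h]

lemma weightA_pos (A : Atom Unit Bool) : 1 ≤ weightA A := by
  by_cases h : A.out = [constB]
  · rw [weightA_eq_of_out A h]
  · rw [weightA_eq_of_ne A h]; omega

lemma weightA_le (A : Atom Unit Bool) : weightA A ≤ 2 := by
  by_cases h : A.out = [constB]
  · rw [weightA_eq_of_out A h]; omega
  · rw [weightA_eq_of_ne A h]

lemma weightA_subst (θ : Subst Bool) (A : Atom Unit Bool) :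
    weightA (A.subst θ) ≤ weightA A := by
  by_cases h : A.out = [constB]
  · have h2 : (A.subst θ).out = [constB] := by
      simp [Atom.subst, substList, h, constB_subst]
    rw [weightA_eq_of_out _ h2, weightA_eq_of_out _ h]
  · rw [weightA_eq_of_ne _ h]; exact weightA_le _

lemma measQ_subst (θ : Subst Bool) (l : Query Unit Bool) :
    measQ (l.map (Atom.subst θ)) ≤ measQ l := by
  unfold measQ
  rw [List.map_map]
  exact List.sum_le_sum (fun A _ => weightA_subst θ A)

lemma measQ_append (l l' : Query Unit Bool) :
    measQ (l ++ l') = measQ l + measQ l' := by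
  simp [measQ]

/-- Every input-consuming step of `examplePgm` strictly decreases the measure. -/
lemma step_dec {Q : Query Unit Bool} {k : ℕ} {c : Clause Unit Bool} {θ : Subst Bool}
    {Q' : Query Unit Bool} (hc : ∃ c0 ∈ examplePgm, IsVariantOf c0 c)
    (hstep : ICStepAt Q k c θ Q') : measQ Q' < measQ Q := by
  obtain ⟨h, hmgu, _, _, hQ'⟩ := hstep
  obtain ⟨c0, hc0mem, ρ, -, rfl⟩ := hc
  -- measure of Q' is bounded by the take/body/drop pieces
  have h1 : measQ Q' ≤ measQ (Q.take k) + measQ (c0.subst ρ).body + measQ (Q.drop (k + 1)) := by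
    rw [hQ']
    refine le_trans (measQ_subst θ _) ?_
    rw [measQ_append, measQ_append]
  -- measure of Q splits
  have hsplitQ : Q = Q.take k ++ Q[k] :: Q.drop (k + 1) := by
    rw [← List.drop_eq_getElem_cons h, List.take_append_drop]
  have h2 : measQ Q = measQ (Q.take k) + weightA Q[k] + measQ (Q.drop (k + 1)) := by
    have hcons : measQ (Q[k] :: Q.drop (k + 1)) = weightA Q[k] + measQ (Q.drop (k + 1)) := by
      simp only [measQ, List.map_cons, List.sum_cons]
    conv_lhs => rw [hsplitQ]
    rw [measQ_append, hcons]
    omega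
  -- the body weight is smaller than the selected atom's weight
  have h3 : measQ (c0.subst ρ).body < weightA Q[k] := by
    simp only [examplePgm, List.mem_cons, List.not_mem_nil, or_false] at hc0mem
    rcases hc0mem with rfl | rfl
    · -- first clause: body is one atom with output [constB]
      have hbody : measQ ((Clause.subst ρ
          (⟨⟨(), [Trm.var 0], [constA]⟩, [⟨(), [Trm.var 0], [constB]⟩]⟩ :
            Clause Unit Bool)).body) = 1 := by
        have : ((⟨(), [Trm.var 0], [constB]⟩ : Atom Unit Bool).subst ρ).out = [constB] := by
          simp [Atom.subst, substList, constB_subst]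
        simp [Clause.subst, measQ, weightA_eq_of_out _ this]
      rw [hbody]
      -- selected atom's output cannot be [constB]
      have hout : substList θ (Q.get ⟨k, h⟩).out = [constA] := by
        have := congrArg Atom.out hmgu.1
        simp only [Atom.subst] at this
        rw [this]
        simp [Clause.subst, Atom.subst, substList, constA_subst]
      have hne : Q[k].out ≠ [constB] := by
        intro hB
        rw [List.get_eq_getElem, hB] at hout
        simp [substList, constB_subst] at hout
        exact constA_ne_constB hout.symm
      rw [weightA_eq_of_ne _ hne]; omega
    · -- second clause: empty body
      have hbody : measQ ((Clause.subst ρ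
          ⟨⟨(), [Trm.var 0], [constB]⟩, ([] : Query Unit Bool)⟩).body) = 0 := by
        simp [Clause.subst, measQ]
      rw [hbody]
      exact weightA_pos _
  omega

/-- The program `{p(X,a) ← p(X,b)., p(X,b).}` with mode
`p(In,Out)` is input terminating but not quasi recurrent: quasi recurrency is
not a necessary condition for input termination. -/
theorem stmt17 : InputTerminating examplePgm ∧ ¬ QuasiRecurrent examplePgm := by
  constructor
  · -- input termination: the measure strictly decreases along any derivation
    rintro Q hNM ⟨d, hQ0⟩
    have hlt : ∀ i : ℕ, (i : ℕ∞) < ⊤ := fun i => by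
      exact_mod_cast lt_top_iff_ne_top.mpr (by simp)
    have hdec : ∀ i, measQ (d.Q (i + 1)) < measQ (d.Q i) := fun i =>
      step_dec (d.fromProg i (hlt i)) (d.step i (hlt i))
    have hbound : ∀ i, measQ (d.Q i) + i ≤ measQ (d.Q 0) := by
      intro i
      induction i with
      | zero => omega
      | succ n ih => have := hdec n; omega
    have := hbound (measQ (d.Q 0) + 1)
    omega
  · -- not quasi recurrent
    rintro ⟨lvl, ⟨hm, -⟩, hqr⟩
    have hc : (⟨⟨(), [Trm.var 0], [constA]⟩, [⟨(), [Trm.var 0], [constB]⟩]⟩ :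
        Clause Unit Bool) ∈ examplePgm := by simp [examplePgm]
    have hmd : MutDep examplePgm () () := ⟨Relation.ReflTransGen.refl, Relation.ReflTransGen.refl⟩
    have hlt := hqr _ hc Subst.id ⟨(), [Trm.var 0], [constB]⟩ (by simp) hmd
    have h1 : (Atom.subst Subst.id ⟨(), [Trm.var 0], [constB]⟩ : Atom Unit Bool)
        = ⟨(), [Trm.var 0], [constB]⟩ := by
      simp [Atom.subst, substList, subst_var', constB_subst, Subst.id]
    have h2 : (Atom.subst Subst.id ⟨(), [Trm.var 0], [constA]⟩ : Atom Unit Bool)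
        = ⟨(), [Trm.var 0], [constA]⟩ := by
      simp [Atom.subst, substList, subst_var', constA_subst, Subst.id]
    rw [h1, h2] at hlt
    have := hm () [Trm.var 0] [constB] [constA]
    omega
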